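/- If C is a small abelian category, then every additive left exact contravariant functor F : C^op → Ab is an ind-object, i.e. is isomorphic to a filtered colimit of representable functors. -/

import Mathlib

open CategoryTheory CategoryTheory.Limits

/-- If `C` is a small abelian category, then every additive left exact functor
`F : Cᵒᵖ ⥤ Ab` is an ind-object, i.e. its underlying presheaf of sets is isomorphic to
a small filtered colimit of representable functors. -/
theorem isIndObject_of_leftExact {C : Type u} [SmallCategory C] [Abelian C]
    (F : Cᵒᵖ ⥤ AddCommGrpCat.{u}) [F.Additive] [PreservesFiniteLimits F] :
    IsIndObject (F ⋙ forget AddCommGrpCat) := by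
  have : PreservesFiniteLimits (F ⋙ forget AddCommGrpCat) :=
    Limits.comp_preservesFiniteLimits _ _
  have h : IsFiltered (CostructuredArrow yoneda (F ⋙ forget AddCommGrpCat)) :=
    isFiltered_costructuredArrow_yoneda_of_preservesFiniteLimits _
  have : FinallySmall.{u} (CostructuredArrow yoneda (F ⋙ forget AddCommGrpCat)) :=
    have : EssentiallySmall.{u} (CostructuredArrow yoneda (F ⋙ forget AddCommGrpCat)) :=
      essentiallySmall_of_small_of_locallySmall _
    finallySmall_of_essentiallySmall _
  exact isIndObject_of_isFiltered_of_finallySmall _
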